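/- Let G be a finite abelian group of order q, Y a finite set, and W a channel (G, Y, W). Let d ∈ G, let d̃ be any element of the cyclic subgroup ⟨d⟩ generated by d, and let ε > 0. If Z_d(W) > 1 − ε, then Z_{d̃}(W) ≥ 1 − q³ε. -/

import Mathlib

/-!
The map `x ↦ (√W(y|x))_y` sends `G` to unit vectors of `ℝ^Y` with
`1 - Z(W_{x,x̃}) = ‖v_x - v_x̃‖² / 2`, so `1 - Z_d(W)` is half the mean squared length of the
steps `v_x → v_{x+d}`. Hence `Z_d(W) > 1 - ε` bounds every such step by `√(2qε)`. Writing
`d̃ = n • d` with `n ≤ q`, the triangle inequality along `x, x + d, …, x + n • d` bounds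
`‖v_x - v_{x+d̃}‖²` by `n² · 2qε ≤ 2q³ε`, and averaging over `x` gives the claim.
-/

open Finset

/-- Bhattacharyya distance between two input symbols:
`Z(W_{x,x̃}) = Σ_y √(W(y|x)·W(y|x̃))`. -/
noncomputable def Zpair {G Y : Type} [Fintype Y] (W : G → Y → ℝ) (x x' : G) : ℝ :=
  ∑ y : Y, Real.sqrt (W x y * W x' y)

/-- `Z_d(W) = (1/q)·Σ_{x∈G} Z(W_{x,x+d})`. -/
noncomputable def Zd {G Y : Type} [Fintype G] [Fintype Y] [Add G]
    (W : G → Y → ℝ) (d : G) : ℝ :=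
  (1 / (Fintype.card G : ℝ)) * ∑ x : G, Zpair W x (x + d)

theorem exists_nsmul_eq_le_card_of_mem_zmultiples {G : Type*} [AddGroup G] [Fintype G]
    {d d' : G} (h : d' ∈ AddSubgroup.zmultiples d) : ∃ n ≤ Fintype.card G, n • d = d' := by
  classical
  obtain ⟨n, hn, rfl⟩ := mem_image.mp (mem_zmultiples_iff_mem_range_addOrderOf.mp h)
  exact ⟨n, (mem_range.mp hn).le.trans addOrderOf_le_card_univ, rfl⟩

theorem dist_add_nsmul_sq_le {G M : Type*} [AddMonoid G] [PseudoMetricSpace M] {f : G → M}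
    {d : G} {c : ℝ} (h : ∀ x, dist (f x) (f (x + d)) ^ 2 ≤ c) (n : ℕ) (x : G) :
    dist (f x) (f (x + n • d)) ^ 2 ≤ n ^ 2 * c := by
  have hc : 0 ≤ c := (sq_nonneg _).trans (h x)
  have hstep : ∀ y, dist (f y) (f (y + d)) ≤ √c := fun y => Real.le_sqrt_of_sq_le (h y)
  have hdist : dist (f x) (f (x + n • d)) ≤ n * √c := by
    calc dist (f x) (f (x + n • d))
        ≤ ∑ i ∈ range n, dist (f (x + i • d)) (f (x + (i + 1) • d)) := by
          simpa using dist_le_range_sum_dist (fun i : ℕ => f (x + i • d)) n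
      _ ≤ ∑ _i ∈ range n, √c := by
          refine sum_le_sum fun i _ => ?_
          rw [succ_nsmul, ← add_assoc]
          exact hstep _
      _ = n * √c := by simp
  calc dist (f x) (f (x + n • d)) ^ 2 ≤ (n * √c) ^ 2 := by gcongr
    _ = n ^ 2 * c := by rw [mul_pow, Real.sq_sqrt hc]

section Hellinger

variable {G Y : Type} [Fintype Y] (W : G → Y → ℝ)

noncomputable def sqrtEmbedding (x : G) : EuclideanSpace ℝ Y :=
  WithLp.toLp 2 fun y => √(W x y)

theorem Zpair_eq_one_sub_dist_sq (hW0 : ∀ x y, 0 ≤ W x y) (hW1 : ∀ x, ∑ y, W x y = 1)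
    (a b : G) : Zpair W a b = 1 - dist (sqrtEmbedding W a) (sqrtEmbedding W b) ^ 2 / 2 := by
  have hterm : ∀ y, dist (√(W a y)) (√(W b y)) ^ 2 = W a y + W b y - 2 * √(W a y * W b y) := by
    intro y
    rw [Real.dist_eq, sq_abs, sub_sq, Real.sq_sqrt (hW0 a y), Real.sq_sqrt (hW0 b y),
      Real.sqrt_mul (hW0 a y)]
    ring
  simp only [EuclideanSpace.dist_sq_eq, sqrtEmbedding, hterm, sum_sub_distrib, sum_add_distrib,
    hW1, ← mul_sum, Zpair]
  ring

variable [Fintype G] [Add G] [Nonempty G]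

theorem one_sub_Zd_eq_sum_dist_sq (hW0 : ∀ x y, 0 ≤ W x y) (hW1 : ∀ x, ∑ y, W x y = 1) (d : G) :
    1 - Zd W d =
      (∑ x, dist (sqrtEmbedding W x) (sqrtEmbedding W (x + d)) ^ 2) / (2 * Fintype.card G) := by
  simp only [Zd, Zpair_eq_one_sub_dist_sq W hW0 hW1, sum_sub_distrib, ← sum_div, sum_const,
    card_univ, nsmul_eq_mul]
  field_simp
  ring

theorem dist_sq_le_of_one_sub_lt_Zd (hW0 : ∀ x y, 0 ≤ W x y) (hW1 : ∀ x, ∑ y, W x y = 1)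
    {d : G} {ε : ℝ} (h : 1 - ε < Zd W d) (x : G) :
    dist (sqrtEmbedding W x) (sqrtEmbedding W (x + d)) ^ 2 ≤ 2 * Fintype.card G * ε := by
  have hq : (0 : ℝ) < 2 * Fintype.card G := by positivity
  have hsum : (∑ x, dist (sqrtEmbedding W x) (sqrtEmbedding W (x + d)) ^ 2)
      / (2 * Fintype.card G) < ε := by
    rw [← one_sub_Zd_eq_sum_dist_sq W hW0 hW1]
    linarith
  rw [div_lt_iff₀ hq] at hsum
  calc dist (sqrtEmbedding W x) (sqrtEmbedding W (x + d)) ^ 2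
      ≤ ∑ x, dist (sqrtEmbedding W x) (sqrtEmbedding W (x + d)) ^ 2 :=
        single_le_sum (fun i _ => sq_nonneg (dist _ (sqrtEmbedding W (i + d)))) (mem_univ x)
    _ ≤ 2 * Fintype.card G * ε := by linarith

theorem one_sub_le_Zd_of_dist_sq_le (hW0 : ∀ x y, 0 ≤ W x y) (hW1 : ∀ x, ∑ y, W x y = 1)
    {d : G} {δ : ℝ} (h : ∀ x, dist (sqrtEmbedding W x) (sqrtEmbedding W (x + d)) ^ 2 ≤ 2 * δ) :
    1 - δ ≤ Zd W d := by
  have hq : (0 : ℝ) < 2 * Fintype.card G := by positivity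
  have hsum : ∑ x, dist (sqrtEmbedding W x) (sqrtEmbedding W (x + d)) ^ 2
      ≤ Fintype.card G * (2 * δ) := by
    simpa using sum_le_sum fun x (_ : x ∈ univ) => h x
  suffices 1 - Zd W d ≤ δ by linarith
  rw [one_sub_Zd_eq_sum_dist_sq W hW0 hW1, div_le_iff₀ hq]
  linarith

end Hellinger

theorem Zd_high_on_cyclic_subgroup
    {G Y : Type} [Fintype G] [AddCommGroup G] [Fintype Y]
    (W : G → Y → ℝ) (hW0 : ∀ x y, 0 ≤ W x y) (hW1 : ∀ x, ∑ y, W x y = 1)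
    (d d' : G) (hd' : d' ∈ AddSubgroup.zmultiples d)
    (ε : ℝ)
    (hZd : Zd W d > 1 - ε) :
    Zd W d' ≥ 1 - (Fintype.card G : ℝ) ^ 3 * ε := by
  obtain ⟨n, hn, rfl⟩ := exists_nsmul_eq_le_card_of_mem_zmultiples hd'
  set q : ℝ := (Fintype.card G : ℝ)
  have hstep := dist_sq_le_of_one_sub_lt_Zd W hW0 hW1 hZd
  have hqε : 0 ≤ 2 * q * ε := (sq_nonneg _).trans (hstep 0)
  refine one_sub_le_Zd_of_dist_sq_le W hW0 hW1 fun x => ?_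
  calc dist (sqrtEmbedding W x) (sqrtEmbedding W (x + n • d)) ^ 2
      ≤ n ^ 2 * (2 * q * ε) := dist_add_nsmul_sq_le hstep n x
    _ ≤ q ^ 2 * (2 * q * ε) := by gcongr; exact Nat.cast_le.mpr hn
    _ = 2 * (q ^ 3 * ε) := by ring
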